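/- Under the same assumptions, the variance of S_k satisfies var(S_k) = (1/n) var(‖t_{(k)}(x)‖²) + 2(1 − 1/n) ν_k, where x is uniform on M. -/

import Mathlib

/-!
For independent centred random vectors `U`, `V` with `E[V Vᵀ] = I`, expand
`‖U + V‖² = ‖U‖² + ‖V‖² + 2⟨U, V⟩`. The covariances of `⟨U, V⟩` with `‖U‖²` and with `‖V‖²`
vanish, since every term carries a lone centred coordinate independent of the rest, while
`E⟨U, V⟩² = ∑_{l,l'} E[U_l U_l'] E[V_l V_l'] = E‖U‖²`. Hence
`Var ‖U + V‖² = Var ‖U‖² + Var ‖V‖² + 4 E‖U‖²`. Adding the i.i.d. summands one at a time, with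
`E‖∑_{i∈s} Y_i‖² = |s| ν`, gives `Var ‖∑_{i∈s} Y_i‖² = |s| Var ‖Y‖² + 2 |s| (|s| - 1) ν`, and
`S_k` is `1/n` times this for `|s| = n`.
-/

open MeasureTheory ProbabilityTheory Finset

section

variable {Ω ι : Type*} [MeasurableSpace Ω] {μ : Measure Ω}

theorem MeasureTheory.MemLp.mul_of_four {f g : Ω → ℝ} (hf : MemLp f 4 μ) (hg : MemLp g 4 μ) :
    MemLp (fun ω => f ω * g ω) 2 μ :=
  haveI : ENNReal.HolderTriple 4 4 2 := ⟨by
    rw [← two_mul, show (4 : ENNReal) = 2 * 2 by norm_num, ENNReal.mul_inv (by simp) (by simp),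
      ← mul_assoc, ENNReal.mul_inv_cancel (by simp) (by simp), one_mul]⟩
  hg.mul hf

theorem aemeasurable_of_memLp_apply [Countable ι] {p : ENNReal} {U : Ω → ι → ℝ}
    (hU : ∀ l, MemLp (fun ω => U ω l) p μ) : AEMeasurable U μ :=
  aemeasurable_pi_lambda U fun l => (hU l).aemeasurable

section TwoVectors

variable [Fintype ι] {U V : Ω → ι → ℝ}

theorem memLp_dotProduct (hU : ∀ l, MemLp (fun ω => U ω l) 4 μ)
    (hV : ∀ l, MemLp (fun ω => V ω l) 4 μ) : MemLp (fun ω => U ω ⬝ᵥ V ω) 2 μ :=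
  memLp_finsetSum _ fun l _ => (hU l).mul_of_four (hV l)

variable (hUV : U ⟂ᵢ[μ] V) (hU : ∀ l, MemLp (fun ω => U ω l) 4 μ)
  (hV : ∀ l, MemLp (fun ω => V ω l) 4 μ)
include hUV hU hV

theorem integral_comp_mul_dotProduct_eq_zero (hV₀ : ∀ l, ∫ ω, V ω l ∂μ = 0)
    {φ : (ι → ℝ) → ℝ} (hφ : Measurable φ) (hφU : MemLp (fun ω => φ (U ω)) 2 μ) :
    ∫ ω, φ (U ω) * (U ω ⬝ᵥ V ω) ∂μ = 0 := by
  have hterm (l : ι) : ∫ ω, φ (U ω) * U ω l * V ω l ∂μ = 0 := by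
    rw [hUV.integral_fun_comp_mul_comp (f := fun u => φ u * u l) (g := fun v => v l)
      (aemeasurable_of_memLp_apply hU) (aemeasurable_of_memLp_apply hV)
      (hφ.mul (measurable_pi_apply l)).aestronglyMeasurable
      (measurable_pi_apply l).aestronglyMeasurable, hV₀, mul_zero]
  simp_rw [dotProduct, mul_sum, ← mul_assoc]
  rw [integral_finsetSum _ fun l _ => ?_]
  · simp [hterm]
  · simp_rw [mul_assoc]
    exact hφU.integrable_mul ((hU l).mul_of_four (hV l))

theorem integral_dotProduct_eq_zero [IsFiniteMeasure μ] (hV₀ : ∀ l, ∫ ω, V ω l ∂μ = 0) :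
    ∫ ω, U ω ⬝ᵥ V ω ∂μ = 0 := by
  simpa using integral_comp_mul_dotProduct_eq_zero hUV hU hV hV₀ measurable_const
    (memLp_const (1 : ℝ))

theorem covariance_comp_dotProduct_eq_zero [IsProbabilityMeasure μ]
    (hV₀ : ∀ l, ∫ ω, V ω l ∂μ = 0)
    {φ : (ι → ℝ) → ℝ} (hφ : Measurable φ) (hφU : MemLp (fun ω => φ (U ω)) 2 μ) :
    cov[fun ω => φ (U ω), fun ω => U ω ⬝ᵥ V ω; μ] = 0 := by
  rw [covariance_eq_sub hφU (memLp_dotProduct hU hV), Pi.mul_def,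
    integral_comp_mul_dotProduct_eq_zero hUV hU hV hV₀ hφ hφU,
    integral_dotProduct_eq_zero hUV hU hV hV₀, mul_zero, sub_zero]

theorem integral_dotProduct_sq_of_isotropic [IsFiniteMeasure μ] [DecidableEq ι]
    (hVcov : ∀ l l', ∫ ω, V ω l * V ω l' ∂μ = if l = l' then 1 else 0) :
    ∫ ω, (U ω ⬝ᵥ V ω) ^ 2 ∂μ = ∫ ω, U ω ⬝ᵥ U ω ∂μ := by
  have hsq (ω : Ω) : (U ω ⬝ᵥ V ω) ^ 2 =
      ∑ l, ∑ l', (U ω l * U ω l') * (V ω l * V ω l') := by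
    simp_rw [sq, dotProduct, sum_mul_sum]
    exact sum_congr rfl fun _ _ => sum_congr rfl fun _ _ => by ring
  have hterm (l l' : ι) : ∫ ω, (U ω l * U ω l') * (V ω l * V ω l') ∂μ =
      (∫ ω, U ω l * U ω l' ∂μ) * if l = l' then 1 else 0 := by
    rw [← hVcov, hUV.integral_fun_comp_mul_comp (f := fun u => u l * u l')
      (g := fun v => v l * v l') (aemeasurable_of_memLp_apply hU)
      (aemeasurable_of_memLp_apply hV)
      ((measurable_pi_apply l).mul (measurable_pi_apply l')).aestronglyMeasurable
      ((measurable_pi_apply l).mul (measurable_pi_apply l')).aestronglyMeasurable]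
  have hint (l l' : ι) : Integrable (fun ω => (U ω l * U ω l') * (V ω l * V ω l')) μ :=
    ((hU l).mul_of_four (hU l')).integrable_mul ((hV l).mul_of_four (hV l'))
  simp_rw [hsq, dotProduct]
  rw [integral_finsetSum _ fun l _ => integrable_finsetSum _ fun l' _ => hint l l',
    integral_finsetSum _ fun l _ => ((hU l).mul_of_four (hU l)).integrable one_le_two]
  refine sum_congr rfl fun l _ => ?_
  rw [integral_finsetSum _ fun l' _ => hint l l']
  simp [hterm]

theorem integral_dotProduct_self_add [IsFiniteMeasure μ] (hV₀ : ∀ l, ∫ ω, V ω l ∂μ = 0) :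
    ∫ ω, (U ω + V ω) ⬝ᵥ (U ω + V ω) ∂μ = ∫ ω, U ω ⬝ᵥ U ω ∂μ + ∫ ω, V ω ⬝ᵥ V ω ∂μ := by
  have hexp (ω : Ω) : (U ω + V ω) ⬝ᵥ (U ω + V ω) =
      U ω ⬝ᵥ U ω + V ω ⬝ᵥ V ω + 2 * U ω ⬝ᵥ V ω := by
    simp only [add_dotProduct, dotProduct_add, dotProduct_comm (V ω) (U ω)]
    ring
  have hUU := (memLp_dotProduct hU hU).integrable one_le_two
  have hVV := (memLp_dotProduct hV hV).integrable one_le_two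
  have hUV₁ := (memLp_dotProduct hU hV).integrable one_le_two
  simp_rw [hexp]
  rw [integral_add (f := fun ω => U ω ⬝ᵥ U ω + V ω ⬝ᵥ V ω) (hUU.add hVV) (hUV₁.const_mul 2),
    integral_add hUU hVV, integral_const_mul,
    integral_dotProduct_eq_zero hUV hU hV hV₀, mul_zero, add_zero]

theorem variance_dotProduct_self_add [IsProbabilityMeasure μ] [DecidableEq ι]
    (hU₀ : ∀ l, ∫ ω, U ω l ∂μ = 0) (hV₀ : ∀ l, ∫ ω, V ω l ∂μ = 0)
    (hVcov : ∀ l l', ∫ ω, V ω l * V ω l' ∂μ = if l = l' then 1 else 0) :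
    Var[fun ω => (U ω + V ω) ⬝ᵥ (U ω + V ω); μ] =
      Var[fun ω => U ω ⬝ᵥ U ω; μ] + Var[fun ω => V ω ⬝ᵥ V ω; μ] +
        4 * ∫ ω, U ω ⬝ᵥ U ω ∂μ := by
  have hsq : Measurable fun u : ι → ℝ => u ⬝ᵥ u := by fun_prop
  have hexp : (fun ω => (U ω + V ω) ⬝ᵥ (U ω + V ω)) =
      ((fun ω => U ω ⬝ᵥ U ω) + fun ω => V ω ⬝ᵥ V ω) + fun ω => 2 * U ω ⬝ᵥ V ω := by
    ext ω
    simp only [Pi.add_apply, add_dotProduct, dotProduct_add, dotProduct_comm (V ω) (U ω)]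
    ring
  have hUU := memLp_dotProduct hU hU
  have hVV := memLp_dotProduct hV hV
  have hcov_VV : cov[fun ω => V ω ⬝ᵥ V ω, fun ω => U ω ⬝ᵥ V ω; μ] = 0 := by
    simp_rw [dotProduct_comm (U _)]
    exact covariance_comp_dotProduct_eq_zero hUV.symm hV hU hU₀ hsq hVV
  have hUV₂ := memLp_dotProduct hU hV
  rw [hexp, variance_add (hUU.add hVV) (hUV₂.const_mul 2),
    IndepFun.variance_add hUU hVV (hUV.comp hsq hsq),
    covariance_add_left hUU hVV (hUV₂.const_mul 2), covariance_const_mul_right,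
    covariance_const_mul_right, covariance_comp_dotProduct_eq_zero hUV hU hV hV₀ hsq hUU, hcov_VV,
    variance_const_mul, variance_eq_sub hUV₂]
  simp only [Pi.pow_apply]
  rw [integral_dotProduct_sq_of_isotropic hUV hU hV hVcov,
    integral_dotProduct_eq_zero hUV hU hV hV₀]
  ring

end TwoVectors

theorem integral_dotProduct_self_of_isotropic [Fintype ι] [DecidableEq ι] {V : Ω → ι → ℝ}
    (hV : ∀ l, MemLp (fun ω => V ω l) 2 μ)
    (hVcov : ∀ l l', ∫ ω, V ω l * V ω l' ∂μ = if l = l' then 1 else 0) :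
    ∫ ω, V ω ⬝ᵥ V ω ∂μ = Fintype.card ι := by
  simp only [dotProduct]
  rw [integral_finsetSum _ fun l _ => ?_]
  · simp [hVcov]
  · exact (hV l).integrable_mul (hV l)

section IIDSums

variable {κ : Type*} {Y : κ → Ω → ι → ℝ}

theorem memLp_sum_apply {p : ENNReal} (hY : ∀ i l, MemLp (fun ω => Y i ω l) p μ)
    (s : Finset κ) (l : ι) : MemLp (fun ω => (∑ i ∈ s, Y i ω) l) p μ := by
  simpa only [Finset.sum_apply] using memLp_finsetSum s fun i _ => hY i l

theorem integral_sum_apply_eq_zero (hY : ∀ i l, Integrable (fun ω => Y i ω l) μ)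
    (hY₀ : ∀ i l, ∫ ω, Y i ω l ∂μ = 0) (s : Finset κ) (l : ι) :
    ∫ ω, (∑ i ∈ s, Y i ω) l ∂μ = 0 := by
  simp only [Finset.sum_apply]
  rw [integral_finsetSum _ fun i _ => hY i l]
  simp [hY₀]

theorem ProbabilityTheory.iIndepFun.indepFun_sum_of_notMem [Countable ι] (hY : iIndepFun Y μ)
    {p : ENNReal} (hYp : ∀ i l, MemLp (fun ω => Y i ω l) p μ) {s : Finset κ} {a : κ}
    (ha : a ∉ s) :
    (fun ω => ∑ i ∈ s, Y i ω) ⟂ᵢ[μ] Y a := by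
  simpa only [sum_fn] using
    hY.indepFun_finsetSum_of_notMem₀ (fun i => aemeasurable_of_memLp_apply (hYp i)) ha

variable [Fintype ι] [DecidableEq ι] [IsProbabilityMeasure μ]
  (hY : iIndepFun Y μ) (hY₄ : ∀ i l, MemLp (fun ω => Y i ω l) 4 μ)
  (hY₀ : ∀ i l, ∫ ω, Y i ω l ∂μ = 0)
  (hYcov : ∀ i l l', ∫ ω, Y i ω l * Y i ω l' ∂μ = if l = l' then 1 else 0)
include hY hY₄ hY₀ hYcov

theorem integral_sum_dotProduct_self (s : Finset κ) :
    ∫ ω, (∑ i ∈ s, Y i ω) ⬝ᵥ (∑ i ∈ s, Y i ω) ∂μ = #s * Fintype.card ι := by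
  classical
  induction s using Finset.induction_on with
  | empty => simp
  | insert a s ha ih =>
    have hsum (ω : Ω) : ∑ i ∈ insert a s, Y i ω = (∑ i ∈ s, Y i ω) + Y a ω := by
      rw [sum_insert ha, add_comm]
    simp_rw [hsum]
    rw [integral_dotProduct_self_add (hY.indepFun_sum_of_notMem hY₄ ha)
      (memLp_sum_apply hY₄ s) (hY₄ a) (hY₀ a), ih,
      integral_dotProduct_self_of_isotropic (fun l => (hY₄ a l).mono_exponent (by norm_num))
        (hYcov a), card_insert_of_notMem ha]
    push_cast
    ring

theorem variance_sum_dotProduct_self {v : ℝ}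
    (hvar : ∀ i, Var[fun ω => Y i ω ⬝ᵥ Y i ω; μ] = v) (s : Finset κ) :
    Var[fun ω => (∑ i ∈ s, Y i ω) ⬝ᵥ (∑ i ∈ s, Y i ω); μ] =
      #s * v + 2 * #s * (#s - 1) * Fintype.card ι := by
  have hY₁ (i : κ) (l : ι) : Integrable (fun ω => Y i ω l) μ := (hY₄ i l).integrable (by norm_num)
  classical
  induction s using Finset.induction_on with
  | empty => simp [← Pi.zero_def, variance_zero]
  | insert a s ha ih =>
    have hsum (ω : Ω) : ∑ i ∈ insert a s, Y i ω = (∑ i ∈ s, Y i ω) + Y a ω := by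
      rw [sum_insert ha, add_comm]
    simp_rw [hsum]
    rw [variance_dotProduct_self_add (hY.indepFun_sum_of_notMem hY₄ ha)
      (memLp_sum_apply hY₄ s) (hY₄ a) (integral_sum_apply_eq_zero hY₁ hY₀ s) (hY₀ a) (hYcov a),
      ih, hvar a,
      integral_sum_dotProduct_self hY hY₄ hY₀ hYcov s, card_insert_of_notMem ha]
    push_cast
    ring

end IIDSums

end

theorem score_statistic_variance_general {Ω : Type*} [MeasurableSpace Ω] (μ : Measure Ω)
    [IsProbabilityMeasure μ] (n ν : ℕ) (hn : 0 < n)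
    (Y : Fin n → Ω → Fin ν → ℝ)
    (hindep : ProbabilityTheory.iIndepFun Y μ)
    (hident : ∀ i j, ProbabilityTheory.IdentDistrib (Y i) (Y j) μ μ)
    (hmem : ∀ i l, MemLp (fun ω => Y i ω l) 4 μ)
    (hmean : ∀ i l, ∫ ω, Y i ω l ∂μ = 0)
    (hcov : ∀ i l l', ∫ ω, Y i ω l * Y i ω l' ∂μ = if l = l' then 1 else 0) :
    ProbabilityTheory.variance (fun ω => (1 / (n : ℝ)) * ∑ l, (∑ i, Y i ω l) ^ 2) μ =
      (1 / (n : ℝ)) *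
          ProbabilityTheory.variance (fun ω => ∑ l, (Y ⟨0, hn⟩ ω l) ^ 2) μ +
        2 * (1 - 1 / (n : ℝ)) * ν := by
  have hsq : Measurable fun v : Fin ν → ℝ => v ⬝ᵥ v := by fun_prop
  have hnorm (v : Fin ν → ℝ) : ∑ l, v l ^ 2 = v ⬝ᵥ v := by simp [dotProduct, sq]
  have hnorm_sum (ω : Ω) : ∑ l, (∑ i, Y i ω l) ^ 2 = (∑ i, Y i ω) ⬝ᵥ (∑ i, Y i ω) := by
    rw [← hnorm]; simp [Finset.sum_apply]
  have hvar (i : Fin n) : Var[fun ω => Y i ω ⬝ᵥ Y i ω; μ] =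
      Var[fun ω => Y ⟨0, hn⟩ ω ⬝ᵥ Y ⟨0, hn⟩ ω; μ] :=
    ((hident i ⟨0, hn⟩).comp hsq).variance_eq
  have hsum := variance_sum_dotProduct_self hindep hmem hmean hcov hvar univ
  simp only [card_univ, Fintype.card_fin] at hsum
  simp_rw [hnorm_sum, hnorm, variance_const_mul, hsum]
  field_simp

/-- Under the same assumptions (`x₁, …, x_n` i.i.d. uniform on `M`, `Y i = t_{(k)}(x_i)`
with mean `0` and identity covariance `I_{ν_k}`, and finite fourth moments), the variance
of `S_k = (1/n) ∑_l (∑ᵢ Yᵢ(l))²` satisfies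
`var(S_k) = (1/n) var(‖t_{(k)}(x)‖²) + 2(1 − 1/n) ν_k`. -/
theorem score_statistic_variance {Ω : Type*} [MeasurableSpace Ω] (μ : Measure Ω)
    [IsProbabilityMeasure μ] (n ν : ℕ) (hn : 0 < n)
    (Y : Fin n → Ω → Fin ν → ℝ)
    (hmeas : ∀ i, Measurable (Y i))
    (hindep : ProbabilityTheory.iIndepFun Y μ)
    (hident : ∀ i j, ProbabilityTheory.IdentDistrib (Y i) (Y j) μ μ)
    (hmem : ∀ i l, MemLp (fun ω => Y i ω l) 4 μ)
    (hmean : ∀ i l, ∫ ω, Y i ω l ∂μ = 0)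
    (hcov : ∀ i l l', ∫ ω, Y i ω l * Y i ω l' ∂μ = if l = l' then 1 else 0) :
    ProbabilityTheory.variance (fun ω => (1 / (n : ℝ)) * ∑ l, (∑ i, Y i ω l) ^ 2) μ =
      (1 / (n : ℝ)) *
          ProbabilityTheory.variance (fun ω => ∑ l, (Y ⟨0, hn⟩ ω l) ^ 2) μ +
        2 * (1 - 1 / (n : ℝ)) * ν :=
  score_statistic_variance_general μ n ν hn Y hindep hident hmem hmean hcov
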